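/- arXiv:1801.03718 — 2 statements merged into one kernel-verified Lean document; each statement's English description precedes it below -/
import Mathlib

section
/- The bracket (Ŷ, b̂) with Ŷ^A = Y₁^B ∂_B Y₂^A − Y₂^B ∂_B Y₁^A + γ^AB (b₁ ∂_B b₂ − b₂ ∂_B b₁) and b̂ = Y₁^B ∂_B b₂ − Y₂^B ∂_B b₁, defined on pairs (Y, b) of a Killing vector of the round 2-sphere and a solution of D_A D_B b + γ_AB b = 0, satisfies the Jacobi identity, making this 6-dimensional space a Lie algebra (isomorphic to the Lorentz algebra so(3,1)). -/
open Real

noncomputable def pth (f : ℝ → ℝ → ℝ) : ℝ → ℝ → ℝ := fun θ φ => deriv (fun x => f x φ) θ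
noncomputable def pph (f : ℝ → ℝ → ℝ) : ℝ → ℝ → ℝ := fun θ φ => deriv (fun y => f θ y) φ

/-- θ-component of the general Killing vector field `m₁Y₁ + m₂Y₂ + m₃Y₃` of the
round 2-sphere (the general Killing field). -/
noncomputable def rotTh (m : Fin 3 → ℝ) : ℝ → ℝ → ℝ :=
  fun _ φ => m 0 * (-Real.sin φ) + m 1 * Real.cos φ

/-- φ-component of the general Killing vector field of the round 2-sphere. -/
noncomputable def rotPh (m : Fin 3 → ℝ) : ℝ → ℝ → ℝ :=
  fun θ φ => -(Real.cos θ / Real.sin θ) * (m 0 * Real.cos φ + m 1 * Real.sin φ) + m 2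

/-- The general solution `b = u·n` of `D_A D_B b + γ_AB b = 0` on the round
sphere (an ℓ = 1 spherical harmonic). -/
noncomputable def linB (u : Fin 3 → ℝ) : ℝ → ℝ → ℝ :=
  fun θ φ => u 0 * (Real.sin θ * Real.cos φ) + u 1 * (Real.sin θ * Real.sin φ)
    + u 2 * Real.cos θ

/-- `Ŷ^θ` of the bracket. -/
noncomputable def brY1 (Y1θ Y1φ b1 Y2θ Y2φ b2 : ℝ → ℝ → ℝ) : ℝ → ℝ → ℝ :=
  fun θ φ => (Y1θ θ φ * pth Y2θ θ φ + Y1φ θ φ * pph Y2θ θ φ + b1 θ φ * pth b2 θ φ)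
    - (Y2θ θ φ * pth Y1θ θ φ + Y2φ θ φ * pph Y1θ θ φ + b2 θ φ * pth b1 θ φ)

/-- `Ŷ^φ` of the bracket. -/
noncomputable def brY2 (Y1θ Y1φ b1 Y2θ Y2φ b2 : ℝ → ℝ → ℝ) : ℝ → ℝ → ℝ :=
  fun θ φ => (Y1θ θ φ * pth Y2φ θ φ + Y1φ θ φ * pph Y2φ θ φ
      + b1 θ φ * pph b2 θ φ / (Real.sin θ)^2)
    - (Y2θ θ φ * pth Y1φ θ φ + Y2φ θ φ * pph Y1φ θ φ
      + b2 θ φ * pph b1 θ φ / (Real.sin θ)^2)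

/-- `b̂` of the bracket. -/
noncomputable def brB (Y1θ Y1φ b1 Y2θ Y2φ b2 : ℝ → ℝ → ℝ) : ℝ → ℝ → ℝ :=
  fun θ φ => (Y1θ θ φ * pth b2 θ φ + Y1φ θ φ * pph b2 θ φ)
    - (Y2θ θ φ * pth b1 θ φ + Y2φ θ φ * pph b1 θ φ)


noncomputable def Mh (m₁ u₁ m₂ u₂ : Fin 3 → ℝ) : Fin 3 → ℝ := fun i =>
  if i = 0 then -(m₁ 1 * m₂ 2 - m₁ 2 * m₂ 1) + (u₁ 1 * u₂ 2 - u₁ 2 * u₂ 1)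
  else if i = 1 then -(m₁ 2 * m₂ 0 - m₁ 0 * m₂ 2) + (u₁ 2 * u₂ 0 - u₁ 0 * u₂ 2)
  else -(m₁ 0 * m₂ 1 - m₁ 1 * m₂ 0) + (u₁ 0 * u₂ 1 - u₁ 1 * u₂ 0)

noncomputable def Uh (m₁ u₁ m₂ u₂ : Fin 3 → ℝ) : Fin 3 → ℝ := fun i =>
  if i = 0 then -(m₁ 1 * u₂ 2 - m₁ 2 * u₂ 1) + (m₂ 1 * u₁ 2 - m₂ 2 * u₁ 1)
  else if i = 1 then -(m₁ 2 * u₂ 0 - m₁ 0 * u₂ 2) + (m₂ 2 * u₁ 0 - m₂ 0 * u₁ 2)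
  else -(m₁ 0 * u₂ 1 - m₁ 1 * u₂ 0) + (m₂ 0 * u₁ 1 - m₂ 1 * u₁ 0)

lemma Mh0 (m₁ u₁ m₂ u₂ : Fin 3 → ℝ) :
    Mh m₁ u₁ m₂ u₂ 0 = -(m₁ 1 * m₂ 2 - m₁ 2 * m₂ 1) + (u₁ 1 * u₂ 2 - u₁ 2 * u₂ 1) := rfl
lemma Mh1 (m₁ u₁ m₂ u₂ : Fin 3 → ℝ) :
    Mh m₁ u₁ m₂ u₂ 1 = -(m₁ 2 * m₂ 0 - m₁ 0 * m₂ 2) + (u₁ 2 * u₂ 0 - u₁ 0 * u₂ 2) := rfl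
lemma Mh2 (m₁ u₁ m₂ u₂ : Fin 3 → ℝ) :
    Mh m₁ u₁ m₂ u₂ 2 = -(m₁ 0 * m₂ 1 - m₁ 1 * m₂ 0) + (u₁ 0 * u₂ 1 - u₁ 1 * u₂ 0) := rfl
lemma Uh0 (m₁ u₁ m₂ u₂ : Fin 3 → ℝ) :
    Uh m₁ u₁ m₂ u₂ 0 = -(m₁ 1 * u₂ 2 - m₁ 2 * u₂ 1) + (m₂ 1 * u₁ 2 - m₂ 2 * u₁ 1) := rfl
lemma Uh1 (m₁ u₁ m₂ u₂ : Fin 3 → ℝ) :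
    Uh m₁ u₁ m₂ u₂ 1 = -(m₁ 2 * u₂ 0 - m₁ 0 * u₂ 2) + (m₂ 2 * u₁ 0 - m₂ 0 * u₁ 2) := rfl
lemma Uh2 (m₁ u₁ m₂ u₂ : Fin 3 → ℝ) :
    Uh m₁ u₁ m₂ u₂ 2 = -(m₁ 0 * u₂ 1 - m₁ 1 * u₂ 0) + (m₂ 0 * u₁ 1 - m₂ 1 * u₁ 0) := rfl

lemma pth_rotTh (m : Fin 3 → ℝ) (θ φ : ℝ) : pth (rotTh m) θ φ = 0 := by
  simp [pth, rotTh]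

lemma pph_rotTh (m : Fin 3 → ℝ) (θ φ : ℝ) :
    pph (rotTh m) θ φ = m 0 * (-Real.cos φ) + m 1 * (-Real.sin φ) := by
  have h : HasDerivAt (fun y => m 0 * (-Real.sin y) + m 1 * Real.cos y)
      (m 0 * (-Real.cos φ) + m 1 * (-Real.sin φ)) φ :=
    ((Real.hasDerivAt_sin φ).neg.const_mul (m 0)).add ((Real.hasDerivAt_cos φ).const_mul (m 1))
  simp only [pph, rotTh]
  exact h.deriv

lemma pth_rotPh (m : Fin 3 → ℝ) {θ : ℝ} (hs : Real.sin θ ≠ 0) (φ : ℝ) :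
    pth (rotPh m) θ φ =
      -((-Real.sin θ * Real.sin θ - Real.cos θ * Real.cos θ) / Real.sin θ ^ 2) *
        (m 0 * Real.cos φ + m 1 * Real.sin φ) := by
  have hdiv : HasDerivAt (fun x => Real.cos x / Real.sin x)
      ((-Real.sin θ * Real.sin θ - Real.cos θ * Real.cos θ) / Real.sin θ ^ 2) θ :=
    (Real.hasDerivAt_cos θ).div (Real.hasDerivAt_sin θ) hs
  have h := ((hdiv.neg.mul_const (m 0 * Real.cos φ + m 1 * Real.sin φ)).add_const (m 2))
  simpa [pth, rotPh, mul_comm] using h.deriv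

lemma pph_rotPh (m : Fin 3 → ℝ) (θ φ : ℝ) :
    pph (rotPh m) θ φ =
      -(Real.cos θ / Real.sin θ) * (m 0 * (-Real.sin φ) + m 1 * Real.cos φ) := by
  have h0 : HasDerivAt (fun y => m 0 * Real.cos y + m 1 * Real.sin y)
      (m 0 * (-Real.sin φ) + m 1 * Real.cos φ) φ :=
    ((Real.hasDerivAt_cos φ).const_mul (m 0)).add ((Real.hasDerivAt_sin φ).const_mul (m 1))
  have h := (h0.const_mul (-(Real.cos θ / Real.sin θ))).add_const (m 2)
  simp only [pph, rotPh]
  exact h.deriv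

lemma pth_linB (u : Fin 3 → ℝ) (θ φ : ℝ) :
    pth (linB u) θ φ = u 0 * (Real.cos θ * Real.cos φ) + u 1 * (Real.cos θ * Real.sin φ)
      + u 2 * (-Real.sin θ) := by
  have h : HasDerivAt
      (fun x => u 0 * (Real.sin x * Real.cos φ) + u 1 * (Real.sin x * Real.sin φ)
        + u 2 * Real.cos x)
      (u 0 * (Real.cos θ * Real.cos φ) + u 1 * (Real.cos θ * Real.sin φ)
        + u 2 * (-Real.sin θ)) θ :=
    ((((Real.hasDerivAt_sin θ).mul_const (Real.cos φ)).const_mul (u 0)).add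
      (((Real.hasDerivAt_sin θ).mul_const (Real.sin φ)).const_mul (u 1))).add
      ((Real.hasDerivAt_cos θ).const_mul (u 2))
  simpa [pth, linB] using h.deriv

lemma pph_linB (u : Fin 3 → ℝ) (θ φ : ℝ) :
    pph (linB u) θ φ = u 0 * (Real.sin θ * (-Real.sin φ)) + u 1 * (Real.sin θ * Real.cos φ) := by
  have h : HasDerivAt
      (fun y => u 0 * (Real.sin θ * Real.cos y) + u 1 * (Real.sin θ * Real.sin y)
        + u 2 * Real.cos θ)
      (u 0 * (Real.sin θ * (-Real.sin φ)) + u 1 * (Real.sin θ * Real.cos φ)) φ := by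
    have := ((((Real.hasDerivAt_cos φ).const_mul (Real.sin θ)).const_mul (u 0)).add
      (((Real.hasDerivAt_sin φ).const_mul (Real.sin θ)).const_mul (u 1))).add_const
      (u 2 * Real.cos θ)
    simpa [mul_assoc] using this
  simpa [pph, linB] using h.deriv

lemma closY1 (m₁ u₁ m₂ u₂ : Fin 3 → ℝ) {θ : ℝ} (hs : Real.sin θ ≠ 0) (φ : ℝ) :
    brY1 (rotTh m₁) (rotPh m₁) (linB u₁) (rotTh m₂) (rotPh m₂) (linB u₂) θ φ
      = rotTh (Mh m₁ u₁ m₂ u₂) θ φ := by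
  have h1 := Real.sin_sq_add_cos_sq θ
  have h2 := Real.sin_sq_add_cos_sq φ
  have h3 : Real.sin θ * (Real.sin θ)⁻¹ = 1 := mul_inv_cancel₀ hs
  unfold brY1
  rw [pth_rotTh, pth_rotTh, pph_rotTh, pph_rotTh, pth_linB, pth_linB]
  simp only [rotTh, rotPh, linB, Mh0, Mh1, Mh2]
  linear_combination ((1:ℝ) * Real.cos φ * u₁ 2 * u₂ 0 + (-1:ℝ) * Real.cos φ * u₁ 0 * u₂ 2 + (1:ℝ) * Real.sin φ * u₁ 2 * u₂ 1 + (-1:ℝ) * Real.sin φ * u₁ 1 * u₂ 2) * h1 + (0:ℝ) * h2 + (0:ℝ) * h3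

lemma closY2 (m₁ u₁ m₂ u₂ : Fin 3 → ℝ) {θ : ℝ} (hs : Real.sin θ ≠ 0) (φ : ℝ) :
    brY2 (rotTh m₁) (rotPh m₁) (linB u₁) (rotTh m₂) (rotPh m₂) (linB u₂) θ φ
      = rotPh (Mh m₁ u₁ m₂ u₂) θ φ := by
  have h1 := Real.sin_sq_add_cos_sq θ
  have h2 := Real.sin_sq_add_cos_sq φ
  have h3 : Real.sin θ * (Real.sin θ)⁻¹ = 1 := mul_inv_cancel₀ hs
  unfold brY2
  rw [pth_rotPh m₁ hs, pth_rotPh m₂ hs, pph_rotPh, pph_rotPh, pph_linB, pph_linB]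
  simp only [rotTh, rotPh, linB, Mh0, Mh1, Mh2]
  linear_combination (0:ℝ) * h1 + ((-1:ℝ) * Real.sin θ ^ 2 * (Real.sin θ)⁻¹ ^ 2 * u₁ 1 * u₂ 0 + (1:ℝ) * Real.sin θ ^ 2 * (Real.sin θ)⁻¹ ^ 2 * u₁ 0 * u₂ 1 + (1:ℝ) * Real.sin θ ^ 2 * (Real.sin θ)⁻¹ ^ 2 * m₁ 1 * m₂ 0 + (-1:ℝ) * Real.sin θ ^ 2 * (Real.sin θ)⁻¹ ^ 2 * m₁ 0 * m₂ 1) * h2 + ((-1:ℝ) * u₁ 1 * u₂ 0 + (1:ℝ) * u₁ 0 * u₂ 1 + (1:ℝ) * m₁ 1 * m₂ 0 + (-1:ℝ) * m₁ 0 * m₂ 1 + (1:ℝ) * Real.cos θ * Real.cos φ * (Real.sin θ)⁻¹ * u₁ 2 * u₂ 1 + (-1:ℝ) * Real.cos θ * Real.cos φ * (Real.sin θ)⁻¹ * u₁ 1 * u₂ 2 + (-1:ℝ) * Real.cos θ * Real.sin φ * (Real.sin θ)⁻¹ * u₁ 2 * u₂ 0 + (1:ℝ) * Real.cos θ * Real.sin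 φ * (Real.sin θ)⁻¹ * u₁ 0 * u₂ 2 + (-1:ℝ) * Real.sin θ * (Real.sin θ)⁻¹ * u₁ 1 * u₂ 0 + (1:ℝ) * Real.sin θ * (Real.sin θ)⁻¹ * u₁ 0 * u₂ 1 + (1:ℝ) * Real.sin θ * (Real.sin θ)⁻¹ * m₁ 1 * m₂ 0 + (-1:ℝ) * Real.sin θ * (Real.sin θ)⁻¹ * m₁ 0 * m₂ 1) * h3

lemma closB (m₁ u₁ m₂ u₂ : Fin 3 → ℝ) {θ : ℝ} (hs : Real.sin θ ≠ 0) (φ : ℝ) :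
    brB (rotTh m₁) (rotPh m₁) (linB u₁) (rotTh m₂) (rotPh m₂) (linB u₂) θ φ
      = linB (Uh m₁ u₁ m₂ u₂) θ φ := by
  have h1 := Real.sin_sq_add_cos_sq θ
  have h2 := Real.sin_sq_add_cos_sq φ
  have h3 : Real.sin θ * (Real.sin θ)⁻¹ = 1 := mul_inv_cancel₀ hs
  unfold brB
  rw [pth_linB, pth_linB, pph_linB, pph_linB]
  simp only [rotTh, rotPh, linB, Uh0, Uh1, Uh2]
  linear_combination (0:ℝ) * h1 + ((-1:ℝ) * Real.cos θ * u₁ 0 * m₂ 1 + (1:ℝ) * Real.cos θ * m₁ 1 * u₂ 0 + (1:ℝ) * Real.sin θ * Real.cos θ * (Real.sin θ)⁻¹ * u₁ 1 * m₂ 0 + (-1:ℝ) * Real.sin θ * Real.cos θ * (Real.sin θ)⁻¹ * m₁ 0 * u₂ 1) * h2 + ((1:ℝ) * Real.cos θ * u₁ 1 * m₂ 0 + (-1:ℝ) * Real.cos θ * m₁ 0 * u₂ 1 + (1:ℝ) * Real.cos θ * Real.sin φ * Real.cos φ * u₁ 1 * m₂ 1 + (-1:ℝ) * Real.cos θ *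 Real.sin φ * Real.cos φ * u₁ 0 * m₂ 0 + (-1:ℝ) * Real.cos θ * Real.sin φ * Real.cos φ * m₁ 1 * u₂ 1 + (1:ℝ) * Real.cos θ * Real.sin φ * Real.cos φ * m₁ 0 * u₂ 0 + (-1:ℝ) * Real.cos θ * Real.sin φ ^ 2 * u₁ 1 * m₂ 0 + (-1:ℝ) * Real.cos θ * Real.sin φ ^ 2 * u₁ 0 * m₂ 1 + (1:ℝ) * Real.cos θ * Real.sin φ ^ 2 * m₁ 1 * u₂ 0 + (1:ℝ) * Real.cos θ * Real.sin φ ^ 2 * m₁ 0 * u₂ 1) * h3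

lemma pth_congr {f g : ℝ → ℝ → ℝ} {θ : ℝ} (hs : Real.sin θ ≠ 0) (φ : ℝ)
    (h : ∀ x y, Real.sin x ≠ 0 → f x y = g x y) : pth f θ φ = pth g θ φ := by
  have hev : (fun x => f x φ) =ᶠ[nhds θ] fun x => g x φ := by
    have h0 : ∀ᶠ x in nhds θ, Real.sin x ≠ 0 :=
      Real.continuous_sin.continuousAt.eventually_ne hs
    filter_upwards [h0] with x hx using h x φ hx
  exact hev.deriv_eq

lemma pph_congr {f g : ℝ → ℝ → ℝ} {θ : ℝ} (hs : Real.sin θ ≠ 0) (φ : ℝ)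
    (h : ∀ x y, Real.sin x ≠ 0 → f x y = g x y) : pph f θ φ = pph g θ φ := by
  have hfun : (fun y => f θ y) = fun y => g θ y := funext fun y => h θ y hs
  unfold pph
  rw [hfun]

lemma brY1_congr (f1 f2 f3 g1 g2 g3 Yθ Yφ b : ℝ → ℝ → ℝ) {θ : ℝ} (hs : Real.sin θ ≠ 0)
    (φ : ℝ) (h1 : ∀ x y, Real.sin x ≠ 0 → f1 x y = g1 x y)
    (h2 : ∀ x y, Real.sin x ≠ 0 → f2 x y = g2 x y)
    (h3 : ∀ x y, Real.sin x ≠ 0 → f3 x y = g3 x y) :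
    brY1 f1 f2 f3 Yθ Yφ b θ φ = brY1 g1 g2 g3 Yθ Yφ b θ φ := by
  unfold brY1
  rw [h1 θ φ hs, h2 θ φ hs, h3 θ φ hs, pth_congr hs φ h1, pph_congr hs φ h1,
    pth_congr hs φ h3]

lemma brY2_congr (f1 f2 f3 g1 g2 g3 Yθ Yφ b : ℝ → ℝ → ℝ) {θ : ℝ} (hs : Real.sin θ ≠ 0)
    (φ : ℝ) (h1 : ∀ x y, Real.sin x ≠ 0 → f1 x y = g1 x y)
    (h2 : ∀ x y, Real.sin x ≠ 0 → f2 x y = g2 x y)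
    (h3 : ∀ x y, Real.sin x ≠ 0 → f3 x y = g3 x y) :
    brY2 f1 f2 f3 Yθ Yφ b θ φ = brY2 g1 g2 g3 Yθ Yφ b θ φ := by
  unfold brY2
  rw [h1 θ φ hs, h2 θ φ hs, h3 θ φ hs, pth_congr hs φ h2, pph_congr hs φ h2,
    pph_congr hs φ h3]

lemma brB_congr (f1 f2 f3 g1 g2 g3 Yθ Yφ b : ℝ → ℝ → ℝ) {θ : ℝ} (hs : Real.sin θ ≠ 0)
    (φ : ℝ) (h1 : ∀ x y, Real.sin x ≠ 0 → f1 x y = g1 x y)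
    (h2 : ∀ x y, Real.sin x ≠ 0 → f2 x y = g2 x y)
    (h3 : ∀ x y, Real.sin x ≠ 0 → f3 x y = g3 x y) :
    brB f1 f2 f3 Yθ Yφ b θ φ = brB g1 g2 g3 Yθ Yφ b θ φ := by
  unfold brB
  rw [h1 θ φ hs, h2 θ φ hs, pth_congr hs φ h3, pph_congr hs φ h3]


/-- the bracket `(Ŷ, b̂)` on pairs of a Killing vector of the
round 2-sphere (which by Statement 1 is `rotTh m, rotPh m` for some `m ∈ ℝ³`)
and a solution `b` of `D_A D_B b + γ_AB b = 0` (which by Statement 0 is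
`linB u` for some `u ∈ ℝ³`) satisfies the Jacobi identity, making this
6-dimensional space a Lie algebra (the Lorentz algebra `so(3,1)`). -/
theorem lorentz_bracket_jacobi (m₁ u₁ m₂ u₂ m₃ u₃ : Fin 3 → ℝ) :
    ∀ θ φ : ℝ, Real.sin θ ≠ 0 →
      (brY1 (brY1 (rotTh m₁) (rotPh m₁) (linB u₁) (rotTh m₂) (rotPh m₂) (linB u₂))
            (brY2 (rotTh m₁) (rotPh m₁) (linB u₁) (rotTh m₂) (rotPh m₂) (linB u₂))
            (brB (rotTh m₁) (rotPh m₁) (linB u₁) (rotTh m₂) (rotPh m₂) (linB u₂))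
            (rotTh m₃) (rotPh m₃) (linB u₃) θ φ
        + brY1 (brY1 (rotTh m₂) (rotPh m₂) (linB u₂) (rotTh m₃) (rotPh m₃) (linB u₃))
            (brY2 (rotTh m₂) (rotPh m₂) (linB u₂) (rotTh m₃) (rotPh m₃) (linB u₃))
            (brB (rotTh m₂) (rotPh m₂) (linB u₂) (rotTh m₃) (rotPh m₃) (linB u₃))
            (rotTh m₁) (rotPh m₁) (linB u₁) θ φ
        + brY1 (brY1 (rotTh m₃) (rotPh m₃) (linB u₃) (rotTh m₁) (rotPh m₁) (linB u₁))
            (brY2 (rotTh m₃) (rotPh m₃) (linB u₃) (rotTh m₁) (rotPh m₁) (linB u₁))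
            (brB (rotTh m₃) (rotPh m₃) (linB u₃) (rotTh m₁) (rotPh m₁) (linB u₁))
            (rotTh m₂) (rotPh m₂) (linB u₂) θ φ = 0) ∧
      (brY2 (brY1 (rotTh m₁) (rotPh m₁) (linB u₁) (rotTh m₂) (rotPh m₂) (linB u₂))
            (brY2 (rotTh m₁) (rotPh m₁) (linB u₁) (rotTh m₂) (rotPh m₂) (linB u₂))
            (brB (rotTh m₁) (rotPh m₁) (linB u₁) (rotTh m₂) (rotPh m₂) (linB u₂))
            (rotTh m₃) (rotPh m₃) (linB u₃) θ φ
        + brY2 (brY1 (rotTh m₂) (rotPh m₂) (linB u₂) (rotTh m₃) (rotPh m₃) (linB u₃))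
            (brY2 (rotTh m₂) (rotPh m₂) (linB u₂) (rotTh m₃) (rotPh m₃) (linB u₃))
            (brB (rotTh m₂) (rotPh m₂) (linB u₂) (rotTh m₃) (rotPh m₃) (linB u₃))
            (rotTh m₁) (rotPh m₁) (linB u₁) θ φ
        + brY2 (brY1 (rotTh m₃) (rotPh m₃) (linB u₃) (rotTh m₁) (rotPh m₁) (linB u₁))
            (brY2 (rotTh m₃) (rotPh m₃) (linB u₃) (rotTh m₁) (rotPh m₁) (linB u₁))
            (brB (rotTh m₃) (rotPh m₃) (linB u₃) (rotTh m₁) (rotPh m₁) (linB u₁))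
            (rotTh m₂) (rotPh m₂) (linB u₂) θ φ = 0) ∧
      (brB (brY1 (rotTh m₁) (rotPh m₁) (linB u₁) (rotTh m₂) (rotPh m₂) (linB u₂))
            (brY2 (rotTh m₁) (rotPh m₁) (linB u₁) (rotTh m₂) (rotPh m₂) (linB u₂))
            (brB (rotTh m₁) (rotPh m₁) (linB u₁) (rotTh m₂) (rotPh m₂) (linB u₂))
            (rotTh m₃) (rotPh m₃) (linB u₃) θ φ
        + brB (brY1 (rotTh m₂) (rotPh m₂) (linB u₂) (rotTh m₃) (rotPh m₃) (linB u₃))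
            (brY2 (rotTh m₂) (rotPh m₂) (linB u₂) (rotTh m₃) (rotPh m₃) (linB u₃))
            (brB (rotTh m₂) (rotPh m₂) (linB u₂) (rotTh m₃) (rotPh m₃) (linB u₃))
            (rotTh m₁) (rotPh m₁) (linB u₁) θ φ
        + brB (brY1 (rotTh m₃) (rotPh m₃) (linB u₃) (rotTh m₁) (rotPh m₁) (linB u₁))
            (brY2 (rotTh m₃) (rotPh m₃) (linB u₃) (rotTh m₁) (rotPh m₁) (linB u₁))
            (brB (rotTh m₃) (rotPh m₃) (linB u₃) (rotTh m₁) (rotPh m₁) (linB u₁))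
            (rotTh m₂) (rotPh m₂) (linB u₂) θ φ = 0) := by
  
  intro θ φ hs
  have H12a : ∀ x y, Real.sin x ≠ 0 →
      brY1 (rotTh m₁) (rotPh m₁) (linB u₁) (rotTh m₂) (rotPh m₂) (linB u₂) x y
        = rotTh (Mh m₁ u₁ m₂ u₂) x y := fun x y hx => closY1 m₁ u₁ m₂ u₂ hx y
  have H12b : ∀ x y, Real.sin x ≠ 0 →
      brY2 (rotTh m₁) (rotPh m₁) (linB u₁) (rotTh m₂) (rotPh m₂) (linB u₂) x y
        = rotPh (Mh m₁ u₁ m₂ u₂) x y := fun x y hx => closY2 m₁ u₁ m₂ u₂ hx y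
  have H12c : ∀ x y, Real.sin x ≠ 0 →
      brB (rotTh m₁) (rotPh m₁) (linB u₁) (rotTh m₂) (rotPh m₂) (linB u₂) x y
        = linB (Uh m₁ u₁ m₂ u₂) x y := fun x y hx => closB m₁ u₁ m₂ u₂ hx y
  have H23a : ∀ x y, Real.sin x ≠ 0 →
      brY1 (rotTh m₂) (rotPh m₂) (linB u₂) (rotTh m₃) (rotPh m₃) (linB u₃) x y
        = rotTh (Mh m₂ u₂ m₃ u₃) x y := fun x y hx => closY1 m₂ u₂ m₃ u₃ hx y
  have H23b : ∀ x y, Real.sin x ≠ 0 →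
      brY2 (rotTh m₂) (rotPh m₂) (linB u₂) (rotTh m₃) (rotPh m₃) (linB u₃) x y
        = rotPh (Mh m₂ u₂ m₃ u₃) x y := fun x y hx => closY2 m₂ u₂ m₃ u₃ hx y
  have H23c : ∀ x y, Real.sin x ≠ 0 →
      brB (rotTh m₂) (rotPh m₂) (linB u₂) (rotTh m₃) (rotPh m₃) (linB u₃) x y
        = linB (Uh m₂ u₂ m₃ u₃) x y := fun x y hx => closB m₂ u₂ m₃ u₃ hx y
  have H31a : ∀ x y, Real.sin x ≠ 0 →
      brY1 (rotTh m₃) (rotPh m₃) (linB u₃) (rotTh m₁) (rotPh m₁) (linB u₁) x y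
        = rotTh (Mh m₃ u₃ m₁ u₁) x y := fun x y hx => closY1 m₃ u₃ m₁ u₁ hx y
  have H31b : ∀ x y, Real.sin x ≠ 0 →
      brY2 (rotTh m₃) (rotPh m₃) (linB u₃) (rotTh m₁) (rotPh m₁) (linB u₁) x y
        = rotPh (Mh m₃ u₃ m₁ u₁) x y := fun x y hx => closY2 m₃ u₃ m₁ u₁ hx y
  have H31c : ∀ x y, Real.sin x ≠ 0 →
      brB (rotTh m₃) (rotPh m₃) (linB u₃) (rotTh m₁) (rotPh m₁) (linB u₁) x y
        = linB (Uh m₃ u₃ m₁ u₁) x y := fun x y hx => closB m₃ u₃ m₁ u₁ hx y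
  refine ⟨?_, ?_, ?_⟩
  · rw [brY1_congr _ _ _ _ _ _ _ _ _ hs φ H12a H12b H12c,
      brY1_congr _ _ _ _ _ _ _ _ _ hs φ H23a H23b H23c,
      brY1_congr _ _ _ _ _ _ _ _ _ hs φ H31a H31b H31c,
      closY1 _ _ m₃ u₃ hs φ, closY1 _ _ m₁ u₁ hs φ, closY1 _ _ m₂ u₂ hs φ]
    simp only [rotTh, Mh0, Mh1, Mh2, Uh0, Uh1, Uh2]
    ring
  · rw [brY2_congr _ _ _ _ _ _ _ _ _ hs φ H12a H12b H12c,
      brY2_congr _ _ _ _ _ _ _ _ _ hs φ H23a H23b H23c,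
      brY2_congr _ _ _ _ _ _ _ _ _ hs φ H31a H31b H31c,
      closY2 _ _ m₃ u₃ hs φ, closY2 _ _ m₁ u₁ hs φ, closY2 _ _ m₂ u₂ hs φ]
    simp only [rotPh, Mh0, Mh1, Mh2, Uh0, Uh1, Uh2]
    ring
  · rw [brB_congr _ _ _ _ _ _ _ _ _ hs φ H12a H12b H12c,
      brB_congr _ _ _ _ _ _ _ _ _ hs φ H23a H23b H23c,
      brB_congr _ _ _ _ _ _ _ _ _ hs φ H31a H31b H31c,
      closB _ _ m₃ u₃ hs φ, closB _ _ m₁ u₁ hs φ, closB _ _ m₂ u₂ hs φ]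
    simp only [linB, Mh0, Mh1, Mh2, Uh0, Uh1, Uh2]
    ring
end

section
/- For each l ≥ 0 the function ω(s, n) = (1−s²)^{−1/2} ψ_l(s) Y_l(n), where ψ_l(s) = (1/2)(1−s²)² Q_l''(s) with Q_l the Legendre function of the second kind and Y_l a degree-l spherical harmonic, solves the equation −(1−s²)² ∂_s² ω + (1−s²) Δ_{S²} ω + 3ω = 0 on (−1,1) × S². -/
open Real

noncomputable def hessTT (f : ℝ → ℝ → ℝ) : ℝ → ℝ → ℝ := fun θ φ => pth (pth f) θ φ
noncomputable def hessPP (f : ℝ → ℝ → ℝ) : ℝ → ℝ → ℝ :=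
  fun θ φ => pph (pph f) θ φ + Real.sin θ * Real.cos θ * pth f θ φ
/-- Laplace–Beltrami operator on the unit round 2-sphere in spherical coordinates. -/
noncomputable def lapS (f : ℝ → ℝ → ℝ) : ℝ → ℝ → ℝ :=
  fun θ φ => hessTT f θ φ + hessPP f θ φ / (Real.sin θ)^2

lemma lapS_const_mul (K : ℝ) (Y : ℝ → ℝ → ℝ) (θ φ : ℝ) :
    lapS (fun a b => K * Y a b) θ φ = K * lapS Y θ φ := by
  simp only [lapS, hessTT, hessPP, pth, pph, deriv_const_mul_field]
  ring

/-- for each `l ≥ 0`, if `Q_l` solves the Legendre equation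
`((1−s²) Q_l')' + l(l+1) Q_l = 0` on `(−1,1)` and `Y_l` is a degree-`l`
spherical harmonic (`Δ_{S²} Y_l = −l(l+1) Y_l`), then
`ω(s,n) = (1−s²)^{−1/2} ψ_l(s) Y_l(n)` with `ψ_l = (1/2)(1−s²)² Q_l''` solves
`−(1−s²)² ∂_s² ω + (1−s²) Δ_{S²} ω + 3 ω = 0` on `(−1,1) × S²`. -/
theorem hyperboloid_supertranslation_solution
    (l : ℕ) (Q : ℝ → ℝ) (Y : ℝ → ℝ → ℝ)
    (hQ : ContDiffOn ℝ (⊤ : ℕ∞) Q (Set.Ioo (-1 : ℝ) 1))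
    (hODE : ∀ s ∈ Set.Ioo (-1 : ℝ) 1,
      deriv (fun s' => (1 - s'^2) * deriv Q s') s + (l * (l + 1) : ℝ) * Q s = 0)
    (hY : ContDiff ℝ (⊤ : ℕ∞) (fun p : ℝ × ℝ => Y p.1 p.2))
    (hharm : ∀ θ φ : ℝ, Real.sin θ ≠ 0 →
      lapS Y θ φ = -(l * (l + 1) : ℝ) * Y θ φ) :
    ∀ s ∈ Set.Ioo (-1 : ℝ) 1, ∀ θ φ : ℝ, Real.sin θ ≠ 0 →
      (- (1 - s^2)^2 *
          deriv (deriv (fun s' => ((1/2) * (1 - s'^2)^2 * deriv (deriv Q) s')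
              / Real.sqrt (1 - s'^2) * Y θ φ)) s
        + (1 - s^2) *
          lapS (fun θ' φ' => ((1/2) * (1 - s^2)^2 * deriv (deriv Q) s)
              / Real.sqrt (1 - s^2) * Y θ' φ') θ φ
        + 3 * (((1/2) * (1 - s^2)^2 * deriv (deriv Q) s)
              / Real.sqrt (1 - s^2) * Y θ φ)) = 0 := by
  intro s hs θ φ hθ
  set lam : ℝ := (l * (l + 1) : ℝ) with hlam
  set c : ℝ := Y θ φ with hcdef
  set I : Set ℝ := Set.Ioo (-1 : ℝ) 1 with hI
  have hIopen : IsOpen I := isOpen_Ioo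
  have hmem : I ∈ nhds s := hIopen.mem_nhds hs
  -- smoothness of derivatives of Q on I
  have hQ1 : ContDiffOn ℝ (⊤ : ℕ∞) (deriv Q) I := hQ.deriv_of_isOpen hIopen (mod_cast le_top)
  have hQ2 : ContDiffOn ℝ (⊤ : ℕ∞) (deriv (deriv Q)) I := hQ1.deriv_of_isOpen hIopen (mod_cast le_top)
  have hQ3 : ContDiffOn ℝ (⊤ : ℕ∞) (deriv (deriv (deriv Q))) I := hQ2.deriv_of_isOpen hIopen (mod_cast le_top)
  have hd : ∀ f : ℝ → ℝ, ContDiffOn ℝ (⊤ : ℕ∞) f I → ∀ t ∈ I, HasDerivAt f (deriv f t) t := by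
    intro f hf t ht
    exact ((hf.differentiableOn (by simp)).differentiableAt (hIopen.mem_nhds ht)).hasDerivAt
  set Q1 := deriv Q with hQ1def
  set P := deriv Q1 with hPdef
  set P1 := deriv P with hP1def
  set P2 := deriv P1 with hP2def
  have hQd : ∀ t ∈ I, HasDerivAt Q (Q1 t) t := hd Q hQ
  have hQ1d : ∀ t ∈ I, HasDerivAt Q1 (P t) t := hd Q1 hQ1
  have hPd : ∀ t ∈ I, HasDerivAt P (P1 t) t := hd P hQ2
  have hP1d : ∀ t ∈ I, HasDerivAt P1 (P2 t) t := hd P1 hQ3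
  have hpos : ∀ t ∈ I, (0:ℝ) < 1 - t^2 := by
    intro t ht
    nlinarith [ht.1, ht.2]
  have hwpos : ∀ t ∈ I, (0:ℝ) < Real.sqrt (1 - t^2) := fun t ht => Real.sqrt_pos.2 (hpos t ht)
  have hwsq : ∀ t ∈ I, (Real.sqrt (1 - t^2))^2 = 1 - t^2 := fun t ht => Real.sq_sqrt (hpos t ht).le
  -- derivative of w = sqrt(1 - t^2)
  have hqd : ∀ t : ℝ, HasDerivAt (fun u : ℝ => 1 - u^2) (-(2*t)) t := by
    intro t
    simpa using (hasDerivAt_pow 2 t).const_sub 1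
  have hwd : ∀ t ∈ I, HasDerivAt (fun u => Real.sqrt (1 - u^2)) (-t / Real.sqrt (1 - t^2)) t := by
    intro t ht
    have h := (Real.hasDerivAt_sqrt (ne_of_gt (hpos t ht))).comp t (hqd t)
    simp only [Function.comp_def] at h
    refine h.congr_deriv ?_
    have := (hwpos t ht).ne'
    field_simp
  -- F1 : Legendre equation in explicit form
  have hF1 : ∀ t ∈ I, (1 - t^2) * P t = 2*t*Q1 t - lam * Q t := by
    intro t ht
    have hderiv : HasDerivAt (fun u => (1 - u^2) * Q1 u) (-(2*t) * Q1 t + (1 - t^2) * P t) t :=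
      (hqd t).mul (hQ1d t ht)
    have h := hODE t ht
    rw [show deriv (fun s' => (1 - s'^2) * deriv Q s') t = -(2*t) * Q1 t + (1 - t^2) * P t
      from hderiv.deriv] at h
    linarith
  -- F2 : first derivative of F1
  have hF2 : ∀ t ∈ I, (1 - t^2) * P1 t = 4*t*P t + (2 - lam) * Q1 t := by
    intro t ht
    have hA : HasDerivAt (fun u => (1 - u^2) * P u) (-(2*t) * P t + (1 - t^2) * P1 t) t :=
      (hqd t).mul (hPd t ht)
    have hB : HasDerivAt (fun u => 2*u*Q1 u - lam * Q u)
        ((2 * Q1 t + 2*t * P t) - lam * Q1 t) t := by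
      have h1 : HasDerivAt (fun u : ℝ => 2*u) 2 t := by
        simpa using (hasDerivAt_id t).const_mul (2:ℝ)
      exact ((h1.mul (hQ1d t ht))).sub ((hQd t ht).const_mul lam)
    have heq : (fun u => (1 - u^2) * P u) =ᶠ[nhds t] (fun u => 2*u*Q1 u - lam * Q u) := by
      filter_upwards [hIopen.mem_nhds ht] with u hu
      exact hF1 u hu
    have hA' : HasDerivAt (fun u => (1 - u^2) * P u) ((2 * Q1 t + 2*t * P t) - lam * Q1 t) t :=
      hB.congr_of_eventuallyEq heq
    have := hA.unique hA'
    linarith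
  -- F3 : second derivative, at s only
  have hF3 : (1 - s^2) * P2 s = 6*s*P1 s + (6 - lam) * P s := by
    have hA : HasDerivAt (fun u => (1 - u^2) * P1 u) (-(2*s) * P1 s + (1 - s^2) * P2 s) s :=
      (hqd s).mul (hP1d s hs)
    have hB : HasDerivAt (fun u => 4*u*P u + (2 - lam) * Q1 u)
        ((4 * P s + 4*s * P1 s) + (2 - lam) * P s) s := by
      have h1 : HasDerivAt (fun u : ℝ => 4*u) 4 s := by
        simpa using (hasDerivAt_id s).const_mul (4:ℝ)
      exact ((h1.mul (hPd s hs))).add ((hQ1d s hs).const_mul (2 - lam))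
    have heq : (fun u => (1 - u^2) * P1 u) =ᶠ[nhds s] (fun u => 4*u*P u + (2 - lam) * Q1 u) := by
      filter_upwards [hmem] with u hu
      exact hF2 u hu
    have hA' : HasDerivAt (fun u => (1 - u^2) * P1 u)
        ((4 * P s + 4*s * P1 s) + (2 - lam) * P s) s := hB.congr_of_eventuallyEq heq
    have := hA.unique hA'
    linarith
  -- the radial function and its smooth representative
  set w : ℝ → ℝ := fun t => Real.sqrt (1 - t^2) with hwdef
  have hgh : (fun s' => ((1/2) * (1 - s'^2)^2 * P s') / Real.sqrt (1 - s'^2) * c)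
      =ᶠ[nhds s] (fun s' => 1/2 * (Real.sqrt (1 - s'^2))^3 * P s' * c) := by
    filter_upwards [hmem] with u hu
    have h2 := hwsq u hu
    have h0 := (hwpos u hu).ne'
    have h4 : (1 - u^2)^2 = (Real.sqrt (1 - u^2))^4 := by
      linear_combination (-(1 - u^2) - (Real.sqrt (1 - u^2))^2) * h2
    field_simp
    linear_combination (P u * c) * h4
  -- first derivative of the representative on I
  have hHd : ∀ t ∈ I, HasDerivAt (fun u => 1/2 * (Real.sqrt (1 - u^2))^3 * P u * c)
      (1/2 * (-3 * t * Real.sqrt (1 - t^2) * P t + (Real.sqrt (1 - t^2))^3 * P1 t) * c) t := by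
    intro t ht
    have h := ((((hwd t ht).pow 3).const_mul (1/2 : ℝ)).mul (hPd t ht)).mul_const c
    refine h.congr_deriv ?_
    have h0 := (hwpos t ht).ne'
    have h2 := hwsq t ht
    simp only [hwdef, Pi.pow_apply, Nat.cast_ofNat]
    field_simp
    ring
  have hderiv1 : deriv (fun s' => ((1/2) * (1 - s'^2)^2 * P s') / Real.sqrt (1 - s'^2) * c)
      =ᶠ[nhds s] (fun t => 1/2 * (-3 * t * Real.sqrt (1 - t^2) * P t
        + (Real.sqrt (1 - t^2))^3 * P1 t) * c) := by
    have h1 := hgh.deriv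
    have h2 : deriv (fun u => 1/2 * (Real.sqrt (1 - u^2))^3 * P u * c)
        =ᶠ[nhds s] (fun t => 1/2 * (-3 * t * Real.sqrt (1 - t^2) * P t
          + (Real.sqrt (1 - t^2))^3 * P1 t) * c) := by
      filter_upwards [hmem] with u hu
      exact (hHd u hu).deriv
    exact h1.trans h2
  -- second derivative at s
  have hh1d : HasDerivAt (fun t => 1/2 * (-3 * t * Real.sqrt (1 - t^2) * P t
      + (Real.sqrt (1 - t^2))^3 * P1 t) * c)
      (1/2 * (((-3 * Real.sqrt (1 - s^2) + (-3*s) * (-s / Real.sqrt (1 - s^2))) * P s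
          + (-3 * s * Real.sqrt (1 - s^2)) * P1 s)
        + ((3 * (Real.sqrt (1 - s^2))^2 * (-s / Real.sqrt (1 - s^2))) * P1 s
          + (Real.sqrt (1 - s^2))^3 * P2 s)) * c) s := by
    have hlin : HasDerivAt (fun u : ℝ => -3 * u) (-3 : ℝ) s := by
      simpa using (hasDerivAt_id s).const_mul (-3 : ℝ)
    have hA : HasDerivAt (fun t => -3 * t * Real.sqrt (1 - t^2) * P t)
        ((-3 * Real.sqrt (1 - s^2) + (-3*s) * (-s / Real.sqrt (1 - s^2))) * P s
          + (-3 * s * Real.sqrt (1 - s^2)) * P1 s) s :=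
      (hlin.mul (hwd s hs)).mul (hPd s hs)
    have hB : HasDerivAt (fun t => (Real.sqrt (1 - t^2))^3 * P1 t)
        ((3 * (Real.sqrt (1 - s^2))^2 * (-s / Real.sqrt (1 - s^2))) * P1 s
          + (Real.sqrt (1 - s^2))^3 * P2 s) s := by
      have := ((hwd s hs).pow 3).mul (hP1d s hs)
      refine this.congr_deriv ?_
      norm_num [hwdef]
    exact ((hA.add hB).const_mul (1/2 : ℝ)).mul_const c
  have hsecond : deriv (deriv (fun s' => ((1/2) * (1 - s'^2)^2 * P s') / Real.sqrt (1 - s'^2) * c)) s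
      = 1/2 * (((-3 * Real.sqrt (1 - s^2) + (-3*s) * (-s / Real.sqrt (1 - s^2))) * P s
          + (-3 * s * Real.sqrt (1 - s^2)) * P1 s)
        + ((3 * (Real.sqrt (1 - s^2))^2 * (-s / Real.sqrt (1 - s^2))) * P1 s
          + (Real.sqrt (1 - s^2))^3 * P2 s)) * c := by
    rw [hderiv1.deriv_eq]
    exact hh1d.deriv
  -- the spherical Laplacian term
  have hlap : lapS (fun θ' φ' => ((1/2) * (1 - s^2)^2 * P s) / Real.sqrt (1 - s^2) * Y θ' φ') θ φ
      = ((1/2) * (1 - s^2)^2 * P s) / Real.sqrt (1 - s^2) * (-lam * c) := by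
    rw [lapS_const_mul (((1/2) * (1 - s^2)^2 * P s) / Real.sqrt (1 - s^2)) Y θ φ, hharm θ φ hθ]
  -- finish
  rw [hsecond, hlap]
  have h0 := (hwpos s hs).ne'
  have h2 := hwsq s hs
  have hP2s : P2 s = (6*s*P1 s + (6 - lam) * P s) / (1 - s^2) := by
    rw [eq_div_iff (hpos s hs).ne']
    linear_combination hF3
  rw [hP2s]
  rw [show (1 - s^2) = (Real.sqrt (1 - s^2))^2 from h2.symm]
  field_simp
  rw [Real.sqrt_sq (hwpos s hs).le]
  linear_combination (-3 * (Real.sqrt (1 - s^2))^4 * P s * c) * h2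
end
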